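/- Let L be a C-loop. If for every z ∈ L the triple (id, L_z∘L_z, J∘L_z∘L_z∘J) is an autotopism of L, then every element of L has order dividing 4, i.e., L has exponent 4. -/
import Mathlib


theorem stmt {L : Type*} (mul : L → L → L) (e : L)
    (hid : ∀ x, mul e x = x ∧ mul x e = x)
    (hLbij : ∀ a, Function.Bijective (fun x => mul a x))
    (hRbij : ∀ a, Function.Bijective (fun x => mul x a))
    (hC : ∀ x y z, mul x (mul y (mul y z)) = mul (mul (mul x y) y) z)
    (inv : L → L)
    (hlip : ∀ x y, mul (inv x) (mul x y) = y)
    (hrip : ∀ x y, mul (mul y x) (inv x) = y)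
    (haut : ∀ z x y, mul x (mul z (mul z y)) =
      inv (mul z (mul z (inv (mul x y))))) :
    ∀ x, mul (mul (mul x x) x) x = e := by
  intro x
  -- inv e = e
  have hinve : inv e = e := by
    have := hlip e e
    rw [(hid e).1, (hid (inv e)).2] at this
    exact this
  -- x · inv x = e
  have hxinv : ∀ a, mul a (inv a) = e := by
    intro a
    have := hrip a e
    rwa [(hid a).1] at this
  -- z·z = inv (z·z)
  have hsq : ∀ z, mul z z = inv (mul z z) := by
    intro z
    have := haut z e e
    rw [(hid e).1, hinve, (hid (mul z (mul z e))).1, (hid z).2] at this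
    exact this
  -- y·(y·z) = (y·y)·z
  have hassoc : ∀ y z, mul y (mul y z) = mul (mul y y) z := by
    intro y z
    have := hC e y z
    rwa [(hid (mul y (mul y z))).1, (hid y).1] at this
  calc mul (mul (mul x x) x) x
      = mul x (mul x (mul x x)) := (hC x x x).symm
    _ = mul (mul x x) (mul x x) := hassoc x (mul x x)
    _ = mul (mul x x) (inv (mul x x)) := by rw [← hsq]
    _ = e := hxinv _
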